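/- In a C-category, for a cofibration i : B ↣ CA, morphisms f₀, f₁ : CA → X with f₀i = f₁i, and an extension μ : C²A → CP{i,i} of κρ(Ci) ∪ κ relative to i₁, the map μ* : [P{Ci,Ci}, X]^{{f₀,f₁}(κ)} → H_i(f₀,f₁) induced by precomposition with μ is a bijection, with inverse [F] ↦ [{f₀ρ, F}]. -/

import Mathlib

set_option linter.unusedVariables false
/-!
Formalization of "Generalized Homotopy theory in Categories with a Natural Cone"
(Díaz, García Calcines).  A `CCat 𝒞` packages the data of a category with a natural
cone: a class of cofibrations, a cone functor `C`, natural transformations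
`κ : 1 → C` and `ρ : CC → C`, together with chosen cofibrated pushouts, satisfying
the axioms C1–C4 of the paper.
-/

open CategoryTheory CategoryTheory.Limits

universe v u

/-- A category with a natural cone (C-category). -/
structure CCat (𝒞 : Type u) [Category.{v} 𝒞] where
  /-- the class of cofibrations -/
  cof : ∀ {X Y : 𝒞}, (X ⟶ Y) → Prop
  /-- the cone functor -/
  cone : 𝒞 ⥤ 𝒞
  /-- the inclusion `κ : 1 → C` -/
  κ : 𝟭 𝒞 ⟶ cone
  /-- the projection `ρ : CC → C` -/
  ρ : cone ⋙ cone ⟶ cone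
  -- C1, cone axiom
  ρ_κ_cone : ∀ X : 𝒞, κ.app (cone.obj X) ≫ ρ.app X = 𝟙 (cone.obj X)
  ρ_cone_κ : ∀ X : 𝒞, cone.map (κ.app X) ≫ ρ.app X = 𝟙 (cone.obj X)
  ρ_assoc : ∀ X : 𝒞, ρ.app (cone.obj X) ≫ ρ.app X = cone.map (ρ.app X) ≫ ρ.app X
  -- C2, pushout axiom: chosen pushouts of cofibrations along arbitrary morphisms
  P : ∀ {B A X : 𝒞} (i : B ⟶ A) (f : B ⟶ X), cof i → 𝒞
  Pbar : ∀ {B A X : 𝒞} (i : B ⟶ A) (f : B ⟶ X) (hi : cof i), A ⟶ P i f hi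
  Pincl : ∀ {B A X : 𝒞} (i : B ⟶ A) (f : B ⟶ X) (hi : cof i), X ⟶ P i f hi
  P_isPushout : ∀ {B A X : 𝒞} (i : B ⟶ A) (f : B ⟶ X) (hi : cof i),
    IsPushout i f (Pbar i f hi) (Pincl i f hi)
  cof_Pincl : ∀ {B A X : 𝒞} (i : B ⟶ A) (f : B ⟶ X) (hi : cof i), cof (Pincl i f hi)
  cone_isPushout : ∀ {B A X : 𝒞} (i : B ⟶ A) (f : B ⟶ X) (hi : cof i),
    IsPushout (cone.map i) (cone.map f) (cone.map (Pbar i f hi)) (cone.map (Pincl i f hi))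
  -- C3, cofibration axiom
  cof_id : ∀ X : 𝒞, cof (𝟙 X)
  cof_κ : ∀ X : 𝒞, cof (κ.app X)
  cof_comp : ∀ {X Y Z : 𝒞} (f : X ⟶ Y) (g : Y ⟶ Z), cof f → cof g → cof (f ≫ g)
  /-- nullhomotopy extension property: a retraction for the cone of each cofibration -/
  nep : ∀ {B A : 𝒞} (i : B ⟶ A), cof i →
    ∃ r : cone.obj A ⟶ cone.obj B, cone.map i ≫ r = 𝟙 (cone.obj B)
  -- C4, relative cone axiom: `i₁ = {Ci, κ} : Σ^i → CA` is a cofibration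
  cof_rel : ∀ {B A : 𝒞} (i : B ⟶ A), cof i →
    cof ((P_isPushout (κ.app B) i (cof_κ B)).desc (cone.map i) (κ.app A)
      (by simpa using (κ.naturality i).symm))

namespace CCat

variable {𝒞 : Type u} [Category.{v} 𝒞]

/-- The relative cone `Σ^i = P{κ, i}` of a morphism `i : B ⟶ A`. -/
def SigmaObj (D : CCat 𝒞) {B A : 𝒞} (i : B ⟶ A) : 𝒞 :=
  D.P (D.κ.app B) i (D.cof_κ B)

/-- The leg `CB ⟶ Σ^i` of the relative cone. -/
def sigInl (D : CCat 𝒞) {B A : 𝒞} (i : B ⟶ A) : D.cone.obj B ⟶ D.SigmaObj i :=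
  D.Pbar (D.κ.app B) i (D.cof_κ B)

/-- The leg `A ⟶ Σ^i` of the relative cone (the induced cofibration `κ̄`). -/
def sigInr (D : CCat 𝒞) {B A : 𝒞} (i : B ⟶ A) : A ⟶ D.SigmaObj i :=
  D.Pincl (D.κ.app B) i (D.cof_κ B)

/-- The morphism `i₁ = {Ci, κ} : Σ^i ⟶ CA`. -/
noncomputable def i1 (D : CCat 𝒞) {B A : 𝒞} (i : B ⟶ A) : D.SigmaObj i ⟶ D.cone.obj A :=
  (D.P_isPushout (D.κ.app B) i (D.cof_κ B)).desc (D.cone.map i) (D.κ.app A)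
    (by simpa using (D.κ.naturality i).symm)

theorem cof_i1 (D : CCat 𝒞) {B A : 𝒞} (i : B ⟶ A) (hi : D.cof i) : D.cof (D.i1 i) :=
  D.cof_rel i hi

/-- Iterated cone `CⁿA`. -/
def cpow (D : CCat 𝒞) (A : 𝒞) : ℕ → 𝒞
  | 0 => A
  | n + 1 => D.cone.obj (cpow D A n)

/-- Iterated projection `ρⁿ : Cⁿ⁺¹A ⟶ CA`. -/
def rpow (D : CCat 𝒞) (A : 𝒞) : ∀ n : ℕ, D.cpow A (n + 1) ⟶ D.cone.obj A
  | 0 => 𝟙 _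
  | n + 1 => D.ρ.app (D.cpow A n) ≫ rpow D A n

/-- `Cⁿf` on iterated cones. -/
def cpowMap (D : CCat 𝒞) {A A' : 𝒞} (f : A ⟶ A') : ∀ n : ℕ, D.cpow A n ⟶ D.cpow A' n
  | 0 => f
  | n + 1 => D.cone.map (cpowMap D f n)

/-- `Cⁿκ_A : CⁿA ⟶ Cⁿ⁺¹A`. -/
def cpowKappa (D : CCat 𝒞) (A : 𝒞) : ∀ n : ℕ, D.cpow A n ⟶ D.cpow A (n + 1)
  | 0 => D.κ.app A
  | n + 1 => D.cone.map (cpowKappa D A n)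

/-- The iterated relative cone construction `i_n` for `i : B ⟶ CA`
(`i_0 = i`, `i_{n+1} = (i_n)₁`), together with its domain. -/
noncomputable def iterCof1 (D : CCat 𝒞) {B A : 𝒞} (i : B ⟶ D.cone.obj A) :
    ∀ n : ℕ, Σ S : 𝒞, S ⟶ D.cone.obj (D.cpow A n)
  | 0 => ⟨B, i⟩
  | n + 1 => ⟨D.SigmaObj (iterCof1 D i n).2, D.i1 (iterCof1 D i n).2⟩

theorem cof_iterCof1 (D : CCat 𝒞) {B A : 𝒞} (i : B ⟶ D.cone.obj A) (hi : D.cof i) :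
    ∀ n : ℕ, D.cof (D.iterCof1 i n).2
  | 0 => hi
  | n + 1 => D.cof_i1 _ (cof_iterCof1 D i hi n)

/-- The iterated relative cone construction for `i : B ⟶ C(CA)`, keeping track of two
outer cones. -/
noncomputable def iterCof2 (D : CCat 𝒞) {B A : 𝒞} (i : B ⟶ D.cone.obj (D.cone.obj A)) :
    ∀ n : ℕ, Σ S : 𝒞, S ⟶ D.cone.obj (D.cone.obj (D.cpow A n))
  | 0 => ⟨B, i⟩
  | n + 1 => ⟨D.SigmaObj (iterCof2 D i n).2, D.i1 (iterCof2 D i n).2⟩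

theorem cof_iterCof2 (D : CCat 𝒞) {B A : 𝒞} (i : B ⟶ D.cone.obj (D.cone.obj A))
    (hi : D.cof i) : ∀ n : ℕ, D.cof (D.iterCof2 i n).2
  | 0 => hi
  | n + 1 => D.cof_i1 _ (cof_iterCof2 D i hi n)

/-- A morphism `f` is nullhomotopic if it extends over `κ`. -/
def Nullhomotopic (D : CCat 𝒞) {X Y : 𝒞} (f : X ⟶ Y) : Prop :=
  ∃ F : D.cone.obj X ⟶ Y, D.κ.app X ≫ F = f

/-- An object is contractible when its identity is nullhomotopic. -/
def Contractible (D : CCat 𝒞) (X : 𝒞) : Prop :=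
  D.Nullhomotopic (𝟙 X)

/-- `F : C²A ⟶ X` is a homotopy from `f₀` to `f₁` relative to `i : B ⟶ CA`, i.e.
`F` is an extension of `{f₀ρ(Ci), f₁}` over `i₁` (expressed on the legs of `Σ^i`). -/
def IsRelHomotopy (D : CCat 𝒞) {B A X : 𝒞} (i : B ⟶ D.cone.obj A)
    (f₀ f₁ : D.cone.obj A ⟶ X) (F : D.cone.obj (D.cone.obj A) ⟶ X) : Prop :=
  D.cone.map i ≫ F = D.cone.map i ≫ D.ρ.app A ≫ f₀ ∧ D.κ.app (D.cone.obj A) ≫ F = f₁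

/-- `f₀ ≃ f₁` rel `i`. -/
def HomotopicRel (D : CCat 𝒞) {B A X : 𝒞} (i : B ⟶ D.cone.obj A)
    (f₀ f₁ : D.cone.obj A ⟶ X) : Prop :=
  ∃ F, D.IsRelHomotopy i f₀ f₁ F

/-- `μ : C²A ⟶ CP{i,i}` is an extension of `κ(ρ(Ci) ∪ 1)` relative to `i₁`
(expressed on the legs of `Σ^i`). -/
def IsMu (D : CCat 𝒞) {B A : 𝒞} (i : B ⟶ D.cone.obj A) (hi : D.cof i)
    (μ : D.cone.obj (D.cone.obj A) ⟶ D.cone.obj (D.P i i hi)) : Prop :=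
  D.cone.map i ≫ μ =
      D.cone.map i ≫ D.ρ.app A ≫ D.Pbar i i hi ≫ D.κ.app (D.P i i hi) ∧
    D.κ.app (D.cone.obj A) ≫ μ = D.Pincl i i hi ≫ D.κ.app (D.P i i hi)

/-- `K = {u, v} : CP{i,i} ⟶ X` (expressed on the legs of `CP{i,i} = P{Ci,Ci}`). -/
def IsQDesc (D : CCat 𝒞) {B A X : 𝒞} (i : B ⟶ D.cone.obj A) (hi : D.cof i)
    (u v : D.cone.obj (D.cone.obj A) ⟶ X) (K : D.cone.obj (D.P i i hi) ⟶ X) : Prop :=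
  D.cone.map (D.Pbar i i hi) ≫ K = u ∧ D.cone.map (D.Pincl i i hi) ≫ K = v

/-- `R = F̄ = {F, f₀ρ}μ`, the inverse operation of the homotopy groupoid. -/
def IsBar (D : CCat 𝒞) {B A X : 𝒞} (i : B ⟶ D.cone.obj A) (hi : D.cof i)
    (μ : D.cone.obj (D.cone.obj A) ⟶ D.cone.obj (D.P i i hi))
    (f₀ : D.cone.obj A ⟶ X) (F R : D.cone.obj (D.cone.obj A) ⟶ X) : Prop :=
  ∃ K, D.IsQDesc i hi F (D.ρ.app A ≫ f₀) K ∧ R = μ ≫ K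

/-- `S = F * G = {F̄, G}μ`, the composition operation of the homotopy groupoid. -/
def IsStar (D : CCat 𝒞) {B A X : 𝒞} (i : B ⟶ D.cone.obj A) (hi : D.cof i)
    (μ : D.cone.obj (D.cone.obj A) ⟶ D.cone.obj (D.P i i hi))
    (f₀ : D.cone.obj A ⟶ X) (F G S : D.cone.obj (D.cone.obj A) ⟶ X) : Prop :=
  ∃ R K, D.IsBar i hi μ f₀ F R ∧ D.IsQDesc i hi R G K ∧ S = μ ≫ K

end CCat

namespace CCat

variable {𝒞 : Type u} [Category.{v} 𝒞]

/-- `G : CP{i,i} ⟶ X` is an extension of `{f₀, f₁}` over `κ : P{i,i} ⟶ CP{i,i}`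
(expressed on the legs of `P{i,i}`). -/
def IsKExt (D : CCat 𝒞) {B A X : 𝒞} (i : B ⟶ D.cone.obj A) (hi : D.cof i)
    (f₀ f₁ : D.cone.obj A ⟶ X) (G : D.cone.obj (D.P i i hi) ⟶ X) : Prop :=
  D.Pbar i i hi ≫ D.κ.app (D.P i i hi) ≫ G = f₀ ∧
    D.Pincl i i hi ≫ D.κ.app (D.P i i hi) ≫ G = f₁

end CCat

attribute [reducible] CCat.SigmaObj

namespace CCat

variable {𝒞 : Type u} [Category.{v} 𝒞]

section Helpers

variable (D : CCat 𝒞)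

lemma kappa_nat {X Y : 𝒞} (f : X ⟶ Y) :
    f ≫ D.κ.app Y = D.κ.app X ≫ D.cone.map f := by
  simpa using D.κ.naturality f

lemma rho_nat {X Y : 𝒞} (f : X ⟶ Y) :
    D.cone.map (D.cone.map f) ≫ D.ρ.app Y = D.ρ.app X ≫ D.cone.map f := by
  simpa using D.ρ.naturality f

lemma pushout_w {B A X : 𝒞} (i : B ⟶ A) (f : B ⟶ X) (hi : D.cof i) :
    i ≫ D.Pbar i f hi = f ≫ D.Pincl i f hi :=
  (D.P_isPushout i f hi).w

lemma sigInl_def {B A : 𝒞} (i : B ⟶ A) :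
    D.sigInl i = D.Pbar (D.κ.app B) i (D.cof_κ B) := rfl

lemma sigInr_def {B A : 𝒞} (i : B ⟶ A) :
    D.sigInr i = D.Pincl (D.κ.app B) i (D.cof_κ B) := rfl

lemma sigInl_i1 {B A : 𝒞} (i : B ⟶ A) :
    D.sigInl i ≫ D.i1 i = D.cone.map i :=
  (D.P_isPushout (D.κ.app B) i (D.cof_κ B)).inl_desc _ _ _

lemma sigInr_i1 {B A : 𝒞} (i : B ⟶ A) :
    D.sigInr i ≫ D.i1 i = D.κ.app A :=
  (D.P_isPushout (D.κ.app B) i (D.cof_κ B)).inr_desc _ _ _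

/-- Any morphism into a cone extends over a cofibration. -/
lemma ext_cone {S T Z : 𝒞} (m : S ⟶ T) (hm : D.cof m) (φ : S ⟶ D.cone.obj Z) :
    ∃ Θ : T ⟶ D.cone.obj Z, m ≫ Θ = φ := by
  obtain ⟨r, hr⟩ := D.nep m hm
  refine ⟨D.κ.app T ≫ r ≫ D.cone.map φ ≫ D.ρ.app Z, ?_⟩
  rw [reassoc_of% D.kappa_nat m, reassoc_of% hr,
    reassoc_of% (D.kappa_nat φ).symm, D.ρ_κ_cone Z, Category.comp_id]

/-- Existence of `μ` for any cofibration `j : B' ⟶ CA'`. -/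
lemma exists_mu {B' A' : 𝒞} (j : B' ⟶ D.cone.obj A') (hj : D.cof j) :
    ∃ μj, D.IsMu j hj μj := by
  have wψ : D.κ.app B' ≫ D.cone.map j ≫ D.ρ.app A' ≫ D.Pbar j j hj
      = j ≫ D.Pincl j j hj := by
    rw [reassoc_of% (D.kappa_nat j).symm, reassoc_of% D.ρ_κ_cone A', D.pushout_w j j hj]
  obtain ⟨μj, hμj⟩ := D.ext_cone (D.i1 j) (D.cof_i1 j hj)
    ((D.P_isPushout (D.κ.app B') j (D.cof_κ B')).desc
      (D.cone.map j ≫ D.ρ.app A' ≫ D.Pbar j j hj) (D.Pincl j j hj) wψ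
      ≫ D.κ.app (D.P j j hj))
  refine ⟨μj, ?_, ?_⟩
  · conv_lhs => rw [← D.sigInl_i1 j]
    rw [Category.assoc, hμj, ← Category.assoc, D.sigInl_def,
      (D.P_isPushout (D.κ.app B') j (D.cof_κ B')).inl_desc]
    simp only [Category.assoc]
  · conv_lhs => rw [← D.sigInr_i1 j]
    rw [Category.assoc, hμj, ← Category.assoc, D.sigInr_def,
      (D.P_isPushout (D.κ.app B') j (D.cof_κ B')).inr_desc]

/-- Homotopy rel a cofibration is symmetric. -/
lemma homotopicRel_symm {B' A' X : 𝒞} (j : B' ⟶ D.cone.obj A') (hj : D.cof j)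
    {f₀ f₁ : D.cone.obj A' ⟶ X} (h : D.HomotopicRel j f₀ f₁) :
    D.HomotopicRel j f₁ f₀ := by
  obtain ⟨F, hF1, hF2⟩ := h
  obtain ⟨μj, hμ1, hμ2⟩ := D.exists_mu j hj
  have wK : D.cone.map j ≫ F = D.cone.map j ≫ (D.ρ.app A' ≫ f₀) := hF1
  refine ⟨μj ≫ (D.cone_isPushout j j hj).desc F (D.ρ.app A' ≫ f₀) wK, ?_, ?_⟩
  · rw [reassoc_of% hμ1, reassoc_of% D.kappa_nat (D.Pbar j j hj),
      (D.cone_isPushout j j hj).inl_desc, hF2]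
  · rw [reassoc_of% hμ2, reassoc_of% D.kappa_nat (D.Pincl j j hj),
      (D.cone_isPushout j j hj).inr_desc, reassoc_of% D.ρ_κ_cone A']

/-- Homotopy rel a cofibration is transitive. -/
lemma homotopicRel_trans {B' A' X : 𝒞} (j : B' ⟶ D.cone.obj A') (hj : D.cof j)
    {f₀ f₁ f₂ : D.cone.obj A' ⟶ X} (h : D.HomotopicRel j f₀ f₁)
    (h' : D.HomotopicRel j f₁ f₂) : D.HomotopicRel j f₀ f₂ := by
  obtain ⟨F, hF1, hF2⟩ := h
  obtain ⟨Gh, hG1, hG2⟩ := h'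
  obtain ⟨μj, hμ1, hμ2⟩ := D.exists_mu j hj
  have wK : D.cone.map j ≫ F = D.cone.map j ≫ (D.ρ.app A' ≫ f₀) := hF1
  set R := μj ≫ (D.cone_isPushout j j hj).desc F (D.ρ.app A' ≫ f₀) wK with hRdef
  have hR1 : D.cone.map j ≫ R = D.cone.map j ≫ D.ρ.app A' ≫ f₁ := by
    rw [hRdef, reassoc_of% hμ1, reassoc_of% D.kappa_nat (D.Pbar j j hj),
      (D.cone_isPushout j j hj).inl_desc, hF2]
  have hR2 : D.κ.app (D.cone.obj A') ≫ R = f₀ := by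
    rw [hRdef, reassoc_of% hμ2, reassoc_of% D.kappa_nat (D.Pincl j j hj),
      (D.cone_isPushout j j hj).inr_desc, reassoc_of% D.ρ_κ_cone A']
  have wK' : D.cone.map j ≫ R = D.cone.map j ≫ Gh := by rw [hR1, hG1]
  refine ⟨μj ≫ (D.cone_isPushout j j hj).desc R Gh wK', ?_, ?_⟩
  · rw [reassoc_of% hμ1, reassoc_of% D.kappa_nat (D.Pbar j j hj),
      (D.cone_isPushout j j hj).inl_desc, hR2]
  · rw [reassoc_of% hμ2, reassoc_of% D.kappa_nat (D.Pincl j j hj),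
      (D.cone_isPushout j j hj).inr_desc, hG2]

/-- A reparametrization `ζ` of the cone which fixes `κ` gives a homotopy rel `κ`
from `G` to `ζ ≫ G`. -/
lemma repar {X : 𝒞} (Q₀ : 𝒞) (ζ : D.cone.obj Q₀ ⟶ D.cone.obj Q₀)
    (hζ : D.κ.app Q₀ ≫ ζ = D.κ.app Q₀) (G : D.cone.obj Q₀ ⟶ X) :
    D.HomotopicRel (D.κ.app Q₀) G (ζ ≫ G) := by
  have w : D.κ.app Q₀ ≫ 𝟙 (D.cone.obj Q₀) = D.κ.app Q₀ ≫ ζ := by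
    rw [Category.comp_id, hζ]
  obtain ⟨Θ, hΘ⟩ := D.ext_cone (D.i1 (D.κ.app Q₀)) (D.cof_i1 _ (D.cof_κ Q₀))
    ((D.P_isPushout (D.κ.app Q₀) (D.κ.app Q₀) (D.cof_κ Q₀)).desc (𝟙 _) ζ w)
  have h1 : D.cone.map (D.κ.app Q₀) ≫ Θ = 𝟙 _ := by
    rw [← D.sigInl_i1 (D.κ.app Q₀), Category.assoc, hΘ, D.sigInl_def]
    exact (D.P_isPushout (D.κ.app Q₀) (D.κ.app Q₀) (D.cof_κ Q₀)).inl_desc _ _ _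
  have h2 : D.κ.app (D.cone.obj Q₀) ≫ Θ = ζ := by
    rw [← D.sigInr_i1 (D.κ.app Q₀), Category.assoc, hΘ, D.sigInr_def]
    exact (D.P_isPushout (D.κ.app Q₀) (D.κ.app Q₀) (D.cof_κ Q₀)).inr_desc _ _ _
  refine ⟨Θ ≫ G, ?_, ?_⟩
  · rw [reassoc_of% h1, reassoc_of% D.ρ_cone_κ Q₀]
  · rw [reassoc_of% h2]

end Helpers

end CCat
namespace CCat

variable {𝒞 : Type u} [Category.{v} 𝒞]

section Main

variable (D : CCat 𝒞)

lemma Pbar_i1 {B A : 𝒞} (i : B ⟶ A) :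
    D.Pbar (D.κ.app B) i (D.cof_κ B) ≫ D.i1 i = D.cone.map i :=
  (D.P_isPushout (D.κ.app B) i (D.cof_κ B)).inl_desc _ _ _

lemma Pincl_i1 {B A : 𝒞} (i : B ⟶ A) :
    D.Pincl (D.κ.app B) i (D.cof_κ B) ≫ D.i1 i = D.κ.app A :=
  (D.P_isPushout (D.κ.app B) i (D.cof_κ B)).inr_desc _ _ _

lemma mapPbar_i1 {B A : 𝒞} (i : B ⟶ A) :
    D.cone.map (D.Pbar (D.κ.app B) i (D.cof_κ B)) ≫ D.cone.map (D.i1 i)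
      = D.cone.map (D.cone.map i) := by
  simp only [← Functor.map_comp]; rw [D.Pbar_i1 i]

lemma mapPincl_i1 {B A : 𝒞} (i : B ⟶ A) :
    D.cone.map (D.Pincl (D.κ.app B) i (D.cof_κ B)) ≫ D.cone.map (D.i1 i)
      = D.cone.map (D.κ.app A) := by
  simp only [← Functor.map_comp]; rw [D.Pincl_i1 i]

/-- Claim 1: `μ ≫ G` is a relative homotopy for any extension `G`. -/
lemma claim1 {B A X : 𝒞} (i : B ⟶ D.cone.obj A) (hi : D.cof i)
    (f₀ f₁ : D.cone.obj A ⟶ X)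
    (μ : D.cone.obj (D.cone.obj A) ⟶ D.cone.obj (D.P i i hi)) (hμ : D.IsMu i hi μ)
    (G : D.cone.obj (D.P i i hi) ⟶ X) (hG : D.IsKExt i hi f₀ f₁ G) :
    D.IsRelHomotopy i f₀ f₁ (μ ≫ G) := by
  obtain ⟨hμ1, hμ2⟩ := hμ
  obtain ⟨hG1, hG2⟩ := hG
  constructor
  · rw [reassoc_of% hμ1, hG1]
  · rw [reassoc_of% hμ2, hG2]

/-- Claim 4a: the desc `{f₀ρ, F}` is an extension of `{f₀, f₁}`. -/
lemma claim4a {B A X : 𝒞} (i : B ⟶ D.cone.obj A) (hi : D.cof i)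
    (f₀ f₁ : D.cone.obj A ⟶ X)
    (F : D.cone.obj (D.cone.obj A) ⟶ X) (K : D.cone.obj (D.P i i hi) ⟶ X)
    (hF : D.IsRelHomotopy i f₀ f₁ F) (hK : D.IsQDesc i hi (D.ρ.app A ≫ f₀) F K) :
    D.IsKExt i hi f₀ f₁ K := by
  obtain ⟨hF1, hF2⟩ := hF
  obtain ⟨hK1, hK2⟩ := hK
  constructor
  · rw [reassoc_of% D.kappa_nat (D.Pbar i i hi), hK1, reassoc_of% D.ρ_κ_cone A]
  · rw [reassoc_of% D.kappa_nat (D.Pincl i i hi), hK2, hF2]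

/-- Claim 4b: `μ ≫ {f₀ρ, F}` is homotopic to `F` rel `i₁`. -/
lemma claim4b {B A X : 𝒞} (i : B ⟶ D.cone.obj A) (hi : D.cof i)
    (f₀ f₁ : D.cone.obj A ⟶ X)
    (μ : D.cone.obj (D.cone.obj A) ⟶ D.cone.obj (D.P i i hi)) (hμ : D.IsMu i hi μ)
    (F : D.cone.obj (D.cone.obj A) ⟶ X) (K : D.cone.obj (D.P i i hi) ⟶ X)
    (hF : D.IsRelHomotopy i f₀ f₁ F) (hK : D.IsQDesc i hi (D.ρ.app A ≫ f₀) F K) :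
    D.HomotopicRel (D.i1 i) (μ ≫ K) F := by
  obtain ⟨hμ1, hμ2⟩ := hμ
  obtain ⟨hF1, hF2⟩ := hF
  obtain ⟨hK1, hK2⟩ := hK
  apply D.homotopicRel_symm (D.i1 i) (D.cof_i1 i hi)
  refine ⟨D.cone.map μ ≫ D.ρ.app (D.P i i hi) ≫ K, ?_, ?_⟩
  · -- cond1 via the pushout `CΣ`
    apply (D.cone_isPushout (D.κ.app B) i (D.cof_κ B)).hom_ext
    · have e2 : D.cone.map (D.cone.map i) ≫ D.cone.map μ
          = D.cone.map (D.cone.map i) ≫ D.cone.map (D.ρ.app A)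
            ≫ D.cone.map (D.Pbar i i hi) ≫ D.cone.map (D.κ.app (D.P i i hi)) := by
        simp only [← Functor.map_comp]; rw [hμ1]
      simp only [reassoc_of% D.mapPbar_i1 i]
      simp only [reassoc_of% e2]
      simp only [reassoc_of% D.ρ_cone_κ (D.P i i hi)]
      rw [hK1]
      simp only [reassoc_of% (D.ρ_assoc A).symm]
      simp only [reassoc_of% D.rho_nat i]
      rw [hF1]
    · have e2' : D.cone.map (D.κ.app (D.cone.obj A)) ≫ D.cone.map μ
          = D.cone.map (D.Pincl i i hi) ≫ D.cone.map (D.κ.app (D.P i i hi)) := by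
        simp only [← Functor.map_comp]; rw [hμ2]
      simp only [reassoc_of% D.mapPincl_i1 i]
      simp only [reassoc_of% e2']
      simp only [reassoc_of% D.ρ_cone_κ (D.P i i hi)]
      simp only [reassoc_of% D.ρ_cone_κ (D.cone.obj A)]
      rw [hK2]
  · simp only [reassoc_of% (D.kappa_nat μ).symm,
      reassoc_of% D.ρ_κ_cone (D.P i i hi)]

end Main

end CCat
namespace CCat

variable {𝒞 : Type u} [Category.{v} 𝒞]

section Fwd

variable (D : CCat 𝒞)

lemma kappa_kappa (X : 𝒞) :
    D.κ.app X ≫ D.κ.app (D.cone.obj X) = D.κ.app X ≫ D.cone.map (D.κ.app X) := by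
  simpa using D.kappa_nat (D.κ.app X)

lemma claim2_forward {B A X : 𝒞} (i : B ⟶ D.cone.obj A) (hi : D.cof i)
    (f₀ f₁ : D.cone.obj A ⟶ X)
    (μ : D.cone.obj (D.cone.obj A) ⟶ D.cone.obj (D.P i i hi)) (hμ : D.IsMu i hi μ)
    (G G' : D.cone.obj (D.P i i hi) ⟶ X)
    (hG : D.IsKExt i hi f₀ f₁ G) (hG' : D.IsKExt i hi f₀ f₁ G')
    (h : D.HomotopicRel (D.κ.app (D.P i i hi)) G G') :
    D.HomotopicRel (D.i1 i) (μ ≫ G) (μ ≫ G') := by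
  obtain ⟨hμ1, hμ2⟩ := hμ
  obtain ⟨hG1, hG2⟩ := hG
  obtain ⟨hG'1, hG'2⟩ := hG'
  obtain ⟨Lh, hLh1, hLh2⟩ := h
  have hLh0 : D.cone.map (D.κ.app (D.P i i hi)) ≫ Lh = G := by
    rw [hLh1, ← Category.assoc, D.ρ_cone_κ]; simp
  have wY : D.cone.map (D.κ.app B) ≫ D.ρ.app B ≫ D.cone.map i ≫ D.ρ.app A ≫
        D.Pbar i i hi ≫ D.κ.app (D.P i i hi) ≫ D.κ.app (D.cone.obj (D.P i i hi))
      = D.cone.map i ≫ (μ ≫ D.cone.map (D.κ.app (D.P i i hi))) := by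
    rw [reassoc_of% D.ρ_cone_κ B, reassoc_of% hμ1, D.kappa_kappa (D.P i i hi)]
  set Y := (D.cone_isPushout (D.κ.app B) i (D.cof_κ B)).desc
      (D.ρ.app B ≫ D.cone.map i ≫ D.ρ.app A ≫
        D.Pbar i i hi ≫ D.κ.app (D.P i i hi) ≫ D.κ.app (D.cone.obj (D.P i i hi)))
      (μ ≫ D.cone.map (D.κ.app (D.P i i hi))) wY with hYdef
  have wΦ : D.κ.app (D.P (D.κ.app B) i (D.cof_κ B)) ≫ Y
      = D.i1 i ≫ (μ ≫ D.κ.app (D.cone.obj (D.P i i hi))) := by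
    apply (D.P_isPushout (D.κ.app B) i (D.cof_κ B)).hom_ext
    · rw [reassoc_of% D.kappa_nat (D.Pbar (D.κ.app B) i (D.cof_κ B)), hYdef]
      simp only [IsPushout.inl_desc]
      rw [reassoc_of% D.ρ_κ_cone B, reassoc_of% D.Pbar_i1 i, reassoc_of% hμ1]
    · rw [reassoc_of% D.kappa_nat (D.Pincl (D.κ.app B) i (D.cof_κ B)), hYdef]
      simp only [IsPushout.inr_desc]
      rw [reassoc_of% hμ2, reassoc_of% D.Pincl_i1 i, reassoc_of% hμ2,
        D.kappa_kappa (D.P i i hi)]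
  obtain ⟨Θ, hΘ⟩ := D.ext_cone (D.i1 (D.i1 i)) (D.cof_i1 (D.i1 i) (D.cof_i1 i hi))
    ((D.P_isPushout (D.κ.app (D.P (D.κ.app B) i (D.cof_κ B))) (D.i1 i)
        (D.cof_κ (D.P (D.κ.app B) i (D.cof_κ B)))).desc Y
      (μ ≫ D.κ.app (D.cone.obj (D.P i i hi))) wΦ)
  have hCJ : D.cone.map (D.i1 i) ≫ Θ = Y := by
    rw [← D.Pbar_i1 (D.i1 i), Category.assoc, hΘ]
    exact (D.P_isPushout (D.κ.app (D.P (D.κ.app B) i (D.cof_κ B))) (D.i1 i)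
        (D.cof_κ (D.P (D.κ.app B) i (D.cof_κ B)))).inl_desc _ _ _
  have hκΘ : D.κ.app (D.cone.obj (D.cone.obj A)) ≫ Θ
      = μ ≫ D.κ.app (D.cone.obj (D.P i i hi)) := by
    rw [← D.Pincl_i1 (D.i1 i), Category.assoc, hΘ]
    exact (D.P_isPushout (D.κ.app (D.P (D.κ.app B) i (D.cof_κ B))) (D.i1 i)
        (D.cof_κ (D.P (D.κ.app B) i (D.cof_κ B)))).inr_desc _ _ _
  refine ⟨Θ ≫ Lh, ?_, ?_⟩
  · -- cond1
    rw [reassoc_of% hCJ]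
    apply (D.cone_isPushout (D.κ.app B) i (D.cof_κ B)).hom_ext
    · rw [hYdef]
      simp only [IsPushout.inl_desc_assoc, Category.assoc]
      rw [hLh2, reassoc_of% D.mapPbar_i1 i, reassoc_of% D.rho_nat i,
        reassoc_of% hμ1, hG1, hG'1]
    · rw [hYdef]
      simp only [IsPushout.inr_desc_assoc, Category.assoc]
      rw [hLh0, reassoc_of% D.mapPincl_i1 i, reassoc_of% D.ρ_cone_κ (D.cone.obj A)]
  · rw [reassoc_of% hκΘ, hLh2]

end Fwd

end CCat
namespace CCat

variable {𝒞 : Type u} [Category.{v} 𝒞]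

section W5

variable (D : CCat 𝒞)

/-- The key gluing construction for the injectivity of `μ*`: there is a morphism `τ`
(built from the nullhomotopy extension property) such that any homotopy `N` whose
restriction along `C²i` is the `f₀`-degenerate one induces a homotopy rel `κ` between
the corresponding descents. -/
lemma w5 {B A X : 𝒞} (i : B ⟶ D.cone.obj A) (hi : D.cof i)
    (f₀ : D.cone.obj A ⟶ X) :
    ∃ τ : D.cone.obj (D.cone.obj A) ⟶ X,
      D.cone.map i ≫ τ = D.cone.map i ≫ D.ρ.app A ≫ f₀ ∧
      ∀ N : D.cone.obj (D.cone.obj (D.cone.obj A)) ⟶ X,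
        D.cone.map (D.cone.map i) ≫ N
          = D.ρ.app B ≫ D.cone.map i ≫ D.ρ.app A ≫ f₀ →
        ∀ K T : D.cone.obj (D.P i i hi) ⟶ X,
          D.cone.map (D.Pbar i i hi) ≫ K = D.ρ.app A ≫ f₀ →
          D.cone.map (D.Pincl i i hi) ≫ K
            = D.cone.map (D.κ.app (D.cone.obj A)) ≫ N →
          D.cone.map (D.Pbar i i hi) ≫ T = τ →
          D.cone.map (D.Pincl i i hi) ≫ T
            = D.κ.app (D.cone.obj (D.cone.obj A)) ≫ N →
          D.HomotopicRel (D.κ.app (D.P i i hi)) K T := by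
  -- the swapped pushout `P' = P(i, κ_B)` and the comparison `d' : P' ⟶ C²A`
  have wd' : i ≫ D.κ.app (D.cone.obj A) = D.κ.app B ≫ D.cone.map i := D.kappa_nat i
  set d' := (D.P_isPushout i (D.κ.app B) hi).desc (D.κ.app (D.cone.obj A))
      (D.cone.map i) wd' with hd'def
  have hPb'd' : D.Pbar i (D.κ.app B) hi ≫ d' = D.κ.app (D.cone.obj A) :=
    (D.P_isPushout i (D.κ.app B) hi).inl_desc _ _ _
  have hPi'd' : D.Pincl i (D.κ.app B) hi ≫ d' = D.cone.map i :=
    (D.P_isPushout i (D.κ.app B) hi).inr_desc _ _ _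
  have ha : D.cof (D.Pincl i (D.κ.app B) hi) := D.cof_Pincl i (D.κ.app B) hi
  -- the gluing object W = P(a, Ci) where a = Pincl(i, κ_B)
  set a := D.Pincl i (D.κ.app B) hi with hadef
  set wP := D.Pbar a (D.cone.map i) ha with hwPdef
  set wC := D.Pincl a (D.cone.map i) ha with hwCdef
  have sqW : a ≫ wP = D.cone.map i ≫ wC := (D.P_isPushout a (D.cone.map i) ha).w
  -- the extension E : C²A ⟶ CP'
  have wE : D.κ.app B ≫ a ≫ D.κ.app (D.P i (D.κ.app B) hi)
      = i ≫ D.Pbar i (D.κ.app B) hi ≫ D.κ.app (D.P i (D.κ.app B) hi) := by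
    rw [← Category.assoc, ← (D.P_isPushout i (D.κ.app B) hi).w, Category.assoc]
  obtain ⟨E, hE⟩ := D.ext_cone (D.i1 i) (D.cof_i1 i hi)
    ((D.P_isPushout (D.κ.app B) i (D.cof_κ B)).desc
      (a ≫ D.κ.app (D.P i (D.κ.app B) hi))
      (D.Pbar i (D.κ.app B) hi ≫ D.κ.app (D.P i (D.κ.app B) hi)) wE)
  have hE1 : D.cone.map i ≫ E = a ≫ D.κ.app (D.P i (D.κ.app B) hi) := by
    rw [← D.Pbar_i1 i, Category.assoc, hE,
      (D.P_isPushout (D.κ.app B) i (D.cof_κ B)).inl_desc]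
  have hE2 : D.κ.app (D.cone.obj A) ≫ E
      = D.Pbar i (D.κ.app B) hi ≫ D.κ.app (D.P i (D.κ.app B) hi) := by
    rw [← D.Pincl_i1 i, Category.assoc, hE,
      (D.P_isPushout (D.κ.app B) i (D.cof_κ B)).inr_desc]
  refine ⟨E ≫ D.cone.map d' ≫ D.ρ.app (D.cone.obj A) ≫ D.ρ.app A ≫ f₀, ?_, ?_⟩
  · -- τ-compatibility
    rw [reassoc_of% hE1, reassoc_of% (D.kappa_nat d').symm,
      reassoc_of% D.ρ_κ_cone (D.cone.obj A), reassoc_of% hPi'd']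
  · intro N hN K T hK0 hK1 hT0 hT1
    -- the desc Λ on CW
    have wΛ : D.cone.map a ≫ D.cone.map d' ≫ D.ρ.app (D.cone.obj A) ≫ D.ρ.app A ≫ f₀
        = D.cone.map (D.cone.map i) ≫ N := by
      have fold : D.cone.map a ≫ D.cone.map d' = D.cone.map (D.cone.map i) := by
        simp only [← Functor.map_comp]; rw [hadef, hPi'd']
      rw [reassoc_of% fold, reassoc_of% D.rho_nat i, hN]
    set Λ := (D.cone_isPushout a (D.cone.map i) ha).desc
      (D.cone.map d' ≫ D.ρ.app (D.cone.obj A) ≫ D.ρ.app A ≫ f₀) N wΛ with hΛdef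
    -- the desc Δ on CQ
    have wΔ : D.cone.map i ≫ E ≫ D.cone.map wP
        = D.cone.map i ≫ D.κ.app (D.cone.obj (D.cone.obj A)) ≫ D.cone.map wC := by
      rw [reassoc_of% hE1, (D.kappa_nat wP).symm, reassoc_of% sqW, D.kappa_nat wC]
    set Δ := (D.cone_isPushout i i hi).desc (E ≫ D.cone.map wP)
      (D.κ.app (D.cone.obj (D.cone.obj A)) ≫ D.cone.map wC) wΔ with hΔdef
    have hΛ0 : D.cone.map wP ≫ Λ
        = D.cone.map d' ≫ D.ρ.app (D.cone.obj A) ≫ D.ρ.app A ≫ f₀ := by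
      rw [hΛdef, hwPdef]
      exact (D.cone_isPushout a (D.cone.map i) ha).inl_desc _ _ _
    have hΛ1 : D.cone.map wC ≫ Λ = N := by
      rw [hΛdef, hwCdef]
      exact (D.cone_isPushout a (D.cone.map i) ha).inr_desc _ _ _
    have hΔ0 : D.cone.map (D.Pbar i i hi) ≫ Δ = E ≫ D.cone.map wP := by
      rw [hΔdef]; exact (D.cone_isPushout i i hi).inl_desc _ _ _
    have hΔ1 : D.cone.map (D.Pincl i i hi) ≫ Δ
        = D.κ.app (D.cone.obj (D.cone.obj A)) ≫ D.cone.map wC := by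
      rw [hΔdef]; exact (D.cone_isPushout i i hi).inr_desc _ _ _
    refine ⟨D.cone.map Δ ≫ D.ρ.app (D.P a (D.cone.map i) ha) ≫ Λ, ?_, ?_⟩
    · -- cond1 : C(κ_Q) ≫ L = C(κ_Q) ≫ ρ_Q ≫ K
      rw [reassoc_of% D.ρ_cone_κ (D.P i i hi)]
      apply (D.cone_isPushout i i hi).hom_ext
      · -- inl leg
        have ej : D.cone.map (D.Pbar i i hi) ≫ D.cone.map (D.κ.app (D.P i i hi))
            = D.cone.map (D.κ.app (D.cone.obj A)) ≫ D.cone.map (D.cone.map (D.Pbar i i hi)) := by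
          simp only [← Functor.map_comp]; rw [D.kappa_nat (D.Pbar i i hi)]
        have eΔ0 : D.cone.map (D.cone.map (D.Pbar i i hi)) ≫ D.cone.map Δ
            = D.cone.map E ≫ D.cone.map (D.cone.map wP) := by
          simp only [← Functor.map_comp]; rw [hΔ0]
        have g1 : D.cone.map (D.κ.app (D.cone.obj A)) ≫ D.cone.map E
            = D.cone.map (D.Pbar i (D.κ.app B) hi)
                ≫ D.cone.map (D.κ.app (D.P i (D.κ.app B) hi)) := by
          simp only [← Functor.map_comp]; rw [hE2]
        have g2 : D.cone.map (D.κ.app (D.P i (D.κ.app B) hi)) ≫ D.cone.map (D.cone.map wP)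
            = D.cone.map wP ≫ D.cone.map (D.κ.app (D.P a (D.cone.map i) ha)) := by
          simp only [← Functor.map_comp]; rw [← D.kappa_nat wP]
        have g3 : D.cone.map (D.Pbar i (D.κ.app B) hi) ≫ D.cone.map d'
            = D.cone.map (D.κ.app (D.cone.obj A)) := by
          simp only [← Functor.map_comp]; rw [hPb'd']
        rw [reassoc_of% ej, reassoc_of% eΔ0, reassoc_of% g1, reassoc_of% g2,
          reassoc_of% D.ρ_cone_κ (D.P a (D.cone.map i) ha), hΛ0,
          reassoc_of% g3, reassoc_of% D.ρ_cone_κ (D.cone.obj A), hK0]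
      · -- inr leg
        have ej' : D.cone.map (D.Pincl i i hi) ≫ D.cone.map (D.κ.app (D.P i i hi))
            = D.cone.map (D.κ.app (D.cone.obj A)) ≫ D.cone.map (D.cone.map (D.Pincl i i hi)) := by
          simp only [← Functor.map_comp]; rw [D.kappa_nat (D.Pincl i i hi)]
        have eΔ1 : D.cone.map (D.cone.map (D.Pincl i i hi)) ≫ D.cone.map Δ
            = D.cone.map (D.κ.app (D.cone.obj (D.cone.obj A)))
                ≫ D.cone.map (D.cone.map wC) := by
          simp only [← Functor.map_comp]; rw [hΔ1]
        have g4 : D.cone.map (D.κ.app (D.cone.obj A))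
              ≫ D.cone.map (D.κ.app (D.cone.obj (D.cone.obj A)))
            = D.cone.map (D.κ.app (D.cone.obj A))
              ≫ D.cone.map (D.cone.map (D.κ.app (D.cone.obj A))) := by
          simp only [← Functor.map_comp]; rw [D.kappa_kappa (D.cone.obj A)]
        have g5 : D.cone.map (D.cone.map (D.κ.app (D.cone.obj A)))
              ≫ D.cone.map (D.cone.map wC)
            = D.cone.map (D.cone.map (D.κ.app (D.cone.obj A) ≫ wC)) := by
          simp only [← Functor.map_comp]
        rw [reassoc_of% ej', reassoc_of% eΔ1, reassoc_of% g4, reassoc_of% g5,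
          reassoc_of% D.rho_nat (D.κ.app (D.cone.obj A) ≫ wC),
          reassoc_of% D.ρ_cone_κ (D.cone.obj A), Functor.map_comp, Category.assoc,
          hΛ1, hK1]
    · -- cond2 : κ.app (CQ) ≫ L = T
      rw [reassoc_of% (D.kappa_nat Δ).symm,
        reassoc_of% D.ρ_κ_cone (D.P a (D.cone.map i) ha)]
      apply (D.cone_isPushout i i hi).hom_ext
      · rw [hT0, reassoc_of% hΔ0, hΛ0]
      · rw [hT1, reassoc_of% hΔ1, hΛ1]

end W5

end CCat
namespace CCat

variable {𝒞 : Type u} [Category.{v} 𝒞]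

section Bwd

variable (D : CCat 𝒞)

lemma claim2_backward {B A X : 𝒞} (i : B ⟶ D.cone.obj A) (hi : D.cof i)
    (f₀ f₁ : D.cone.obj A ⟶ X)
    (μ : D.cone.obj (D.cone.obj A) ⟶ D.cone.obj (D.P i i hi)) (hμ : D.IsMu i hi μ)
    (G G' : D.cone.obj (D.P i i hi) ⟶ X)
    (hG : D.IsKExt i hi f₀ f₁ G) (hG' : D.IsKExt i hi f₀ f₁ G')
    (h : D.HomotopicRel (D.i1 i) (μ ≫ G) (μ ≫ G')) :
    D.HomotopicRel (D.κ.app (D.P i i hi)) G G' := by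
  obtain ⟨hμ1, hμ2⟩ := hμ
  obtain ⟨hG1, hG2⟩ := hG
  obtain ⟨hG'1, hG'2⟩ := hG'
  obtain ⟨N, hN1, hN2⟩ := h
  -- faces of N
  have hNb : D.cone.map (D.κ.app (D.cone.obj A)) ≫ N = μ ≫ G := by
    rw [← D.mapPincl_i1 i, Category.assoc, hN1, reassoc_of% D.mapPincl_i1 i,
      reassoc_of% D.ρ_cone_κ (D.cone.obj A)]
  have hNa : D.cone.map (D.cone.map i) ≫ N
      = D.ρ.app B ≫ D.cone.map i ≫ D.ρ.app A ≫ f₀ := by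
    rw [← D.mapPbar_i1 i, Category.assoc, hN1, reassoc_of% D.mapPbar_i1 i,
      reassoc_of% D.rho_nat i, reassoc_of% hμ1, hG1]
  -- the reparametrization ζ₀
  have wζ : D.cone.map i ≫ D.ρ.app A ≫ D.Pbar i i hi ≫ D.κ.app (D.P i i hi)
      = D.cone.map i ≫ μ := hμ1.symm
  set ζ := (D.cone_isPushout i i hi).desc
      (D.ρ.app A ≫ D.Pbar i i hi ≫ D.κ.app (D.P i i hi)) μ wζ with hζdef
  have hζ0 : D.cone.map (D.Pbar i i hi) ≫ ζ
      = D.ρ.app A ≫ D.Pbar i i hi ≫ D.κ.app (D.P i i hi) := by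
    rw [hζdef]; exact (D.cone_isPushout i i hi).inl_desc _ _ _
  have hζ1 : D.cone.map (D.Pincl i i hi) ≫ ζ = μ := by
    rw [hζdef]; exact (D.cone_isPushout i i hi).inr_desc _ _ _
  have hζκ : D.κ.app (D.P i i hi) ≫ ζ = D.κ.app (D.P i i hi) := by
    apply (D.P_isPushout i i hi).hom_ext
    · rw [reassoc_of% D.kappa_nat (D.Pbar i i hi), hζ0,
        reassoc_of% D.ρ_κ_cone A]
    · rw [reassoc_of% D.kappa_nat (D.Pincl i i hi), hζ1, hμ2]
  have hX1 : D.HomotopicRel (D.κ.app (D.P i i hi)) G (ζ ≫ G) :=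
    D.repar (D.P i i hi) ζ hζκ G
  have hX2 : D.HomotopicRel (D.κ.app (D.P i i hi)) G' (ζ ≫ G') :=
    D.repar (D.P i i hi) ζ hζκ G'
  -- the w5 machinery
  obtain ⟨τ, hτ, hw⟩ := D.w5 i hi f₀
  have wT : D.cone.map i ≫ τ = D.cone.map i ≫ (μ ≫ G') := by
    rw [hτ, reassoc_of% hμ1, hG'1]
  set T := (D.cone_isPushout i i hi).desc τ (μ ≫ G') wT with hTdef
  have hT0 : D.cone.map (D.Pbar i i hi) ≫ T = τ := by
    rw [hTdef]; exact (D.cone_isPushout i i hi).inl_desc _ _ _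
  have hT1 : D.cone.map (D.Pincl i i hi) ≫ T = μ ≫ G' := by
    rw [hTdef]; exact (D.cone_isPushout i i hi).inr_desc _ _ _
  -- legs of ζ ≫ G and ζ ≫ G'
  have hK10 : D.cone.map (D.Pbar i i hi) ≫ (ζ ≫ G) = D.ρ.app A ≫ f₀ := by
    rw [reassoc_of% hζ0, hG1]
  have hK11 : D.cone.map (D.Pincl i i hi) ≫ (ζ ≫ G)
      = D.cone.map (D.κ.app (D.cone.obj A)) ≫ N := by
    rw [reassoc_of% hζ1, hNb]
  have hK20 : D.cone.map (D.Pbar i i hi) ≫ (ζ ≫ G') = D.ρ.app A ≫ f₀ := by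
    rw [reassoc_of% hζ0, hG'1]
  -- homotopy from ζ≫G to T (via N)
  have hTN1 : D.cone.map (D.Pincl i i hi) ≫ T
      = D.κ.app (D.cone.obj (D.cone.obj A)) ≫ N := by
    rw [hT1, hN2]
  have h12 : D.HomotopicRel (D.κ.app (D.P i i hi)) (ζ ≫ G) T :=
    hw N hNa (ζ ≫ G) T hK10 hK11 hT0 hTN1
  -- homotopy from ζ≫G' to T (via the reflexive homotopy of μ≫G')
  have hN2a : D.cone.map (D.cone.map i) ≫ (D.ρ.app (D.cone.obj A) ≫ μ ≫ G')
      = D.ρ.app B ≫ D.cone.map i ≫ D.ρ.app A ≫ f₀ := by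
    rw [reassoc_of% D.rho_nat i, reassoc_of% hμ1, hG'1]
  have hK21 : D.cone.map (D.Pincl i i hi) ≫ (ζ ≫ G')
      = D.cone.map (D.κ.app (D.cone.obj A)) ≫ (D.ρ.app (D.cone.obj A) ≫ μ ≫ G') := by
    rw [reassoc_of% hζ1, reassoc_of% D.ρ_cone_κ (D.cone.obj A)]
  have hTN2 : D.cone.map (D.Pincl i i hi) ≫ T
      = D.κ.app (D.cone.obj (D.cone.obj A)) ≫ (D.ρ.app (D.cone.obj A) ≫ μ ≫ G') := by
    rw [hT1, reassoc_of% D.ρ_κ_cone (D.cone.obj A)]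
  have h34 : D.HomotopicRel (D.κ.app (D.P i i hi)) (ζ ≫ G') T :=
    hw (D.ρ.app (D.cone.obj A) ≫ μ ≫ G') hN2a (ζ ≫ G') T hK20 hK21 hT0 hTN2
  -- assemble
  exact D.homotopicRel_trans (D.κ.app (D.P i i hi)) (D.cof_κ (D.P i i hi))
    (D.homotopicRel_trans (D.κ.app (D.P i i hi)) (D.cof_κ (D.P i i hi)) hX1 h12)
    (D.homotopicRel_symm (D.κ.app (D.P i i hi)) (D.cof_κ (D.P i i hi))
      (D.homotopicRel_trans (D.κ.app (D.P i i hi)) (D.cof_κ (D.P i i hi)) hX2 h34))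

end Bwd

end CCat
/-- for a cofibration `i : B ↣ CA`, `f₀, f₁ : CA ⟶ X` with `f₀i = f₁i`,
and an extension `μ : C²A ⟶ CP{i,i}` of `κ(ρ(Ci) ∪ 1)` relative to `i₁`, precomposition
with `μ` induces a bijection `μ* : [P{Ci,Ci}, X]^{{f₀,f₁}(κ)} → H_i(f₀,f₁)`, with inverse
`[F] ↦ [{f₀ρ, F}]`. -/
theorem stmt_8 {𝒞 : Type u} [Category.{v} 𝒞] (D : CCat 𝒞) {B A X : 𝒞}
    (i : B ⟶ D.cone.obj A) (hi : D.cof i) (f₀ f₁ : D.cone.obj A ⟶ X)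
    (h01 : i ≫ f₀ = i ≫ f₁)
    (μ : D.cone.obj (D.cone.obj A) ⟶ D.cone.obj (D.P i i hi)) (hμ : D.IsMu i hi μ) :
    -- `μ*` is well defined on extensions
    (∀ G, D.IsKExt i hi f₀ f₁ G → D.IsRelHomotopy i f₀ f₁ (μ ≫ G)) ∧
    -- `μ*` is well defined on homotopy classes and injective
    (∀ G G', D.IsKExt i hi f₀ f₁ G → D.IsKExt i hi f₀ f₁ G' →
      (D.HomotopicRel (D.κ.app (D.P i i hi)) G G' ↔
        D.HomotopicRel (D.i1 i) (μ ≫ G) (μ ≫ G'))) ∧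
    -- `μ*` is surjective
    (∀ F, D.IsRelHomotopy i f₀ f₁ F →
      ∃ G, D.IsKExt i hi f₀ f₁ G ∧ D.HomotopicRel (D.i1 i) (μ ≫ G) F) ∧
    -- the inverse is given by `[F] ↦ [{f₀ρ, F}]`
    (∀ F K, D.IsRelHomotopy i f₀ f₁ F →
      D.IsQDesc i hi (D.ρ.app A ≫ f₀) F K →
      D.IsKExt i hi f₀ f₁ K ∧ D.HomotopicRel (D.i1 i) (μ ≫ K) F) := by
  refine ⟨?_, ?_, ?_, ?_⟩
  · intro G hG
    exact D.claim1 i hi f₀ f₁ μ hμ G hG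
  · intro G G' hG hG'
    constructor
    · exact D.claim2_forward i hi f₀ f₁ μ hμ G G' hG hG'
    · exact D.claim2_backward i hi f₀ f₁ μ hμ G G' hG hG'
  · intro F hF
    refine ⟨(D.cone_isPushout i i hi).desc (D.ρ.app A ≫ f₀) F hF.1.symm, ?_, ?_⟩
    · exact D.claim4a i hi f₀ f₁ F _ hF
        ⟨(D.cone_isPushout i i hi).inl_desc _ _ _, (D.cone_isPushout i i hi).inr_desc _ _ _⟩
    · exact D.claim4b i hi f₀ f₁ μ hμ F _ hF
        ⟨(D.cone_isPushout i i hi).inl_desc _ _ _, (D.cone_isPushout i i hi).inr_desc _ _ _⟩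
  · intro F K hF hK
    exact ⟨D.claim4a i hi f₀ f₁ F K hF hK, D.claim4b i hi f₀ f₁ μ hμ F K hF hK⟩
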